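/- Consider N = 2, P(x) the constant matrix diag(−3, 0) on [0,π], and Dirichlet boundary conditions. Then every eigenvalue λ ≠ 1 of this problem is simple: for every real λ ≠ 1, the real vector space of C² functions φ : [0,π] → ℝ² with −φ'' + P·φ = λ·φ, φ(0) = 0 and φ(π) = 0 has dimension at most 1. -/

import Mathlib

/-! The potential is diagonal, so the components of a solution solve the scalar problems
`u'' = (-3 - l) u` and `u'' = -l u`. Comparing with `sin (√(-c) x)`, resp. `sinh (√c x)`, every
solution of `u'' = c u`, `u 0 = u π = 0` has `u' 0 = 0` unless `-c` is the square of an integer,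
and `l + 3 = m²`, `l = n²` force `l = 1`. So for `l ≠ 1` one component of every solution has zero
slope at `0`, and by uniqueness for the ODE a solution is determined by the slope of the other
component at `0`: any two solutions are linearly dependent. -/

open Matrix MeasureTheory Set Filter

attribute [local instance] Matrix.normedAddCommGroup Matrix.normedSpace

/-- `φ` is a C² solution of the Dirichlet problem `-φ'' + P·φ = l·φ`, `φ(0) = φ(π) = 0`
for the constant potential `P = diag(-3, 0)`. -/
def DirichletSol (l : ℝ) (φ : ℝ → Fin 2 → ℝ) : Prop :=
  ContDiff ℝ 2 φ ∧
    (∀ x ∈ Set.Icc (0:ℝ) Real.pi,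
      -(deriv (deriv φ) x) + !![(-3:ℝ), 0; 0, 0] *ᵥ φ x = l • φ x) ∧
    φ 0 = 0 ∧ φ Real.pi = 0

section

variable {E : Type*} [NormedAddCommGroup E] [NormedSpace ℝ E]

def Deriv2EqSMulOn (c : ℝ) (s : Set ℝ) (u : ℝ → E) : Prop :=
  ContDiff ℝ 2 u ∧ ∀ x ∈ s, deriv (deriv u) x = c • u x

theorem deriv_smul_add_smul {u v : ℝ → E} (hu : Differentiable ℝ u) (hv : Differentiable ℝ v)
    (a b : ℝ) : deriv (fun x => a • u x + b • v x) = fun x => a • deriv u x + b • deriv v x :=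
  funext fun x => (((hu x).hasDerivAt.const_smul a).add ((hv x).hasDerivAt.const_smul b)).deriv

namespace Deriv2EqSMulOn

variable {c : ℝ} {s : Set ℝ} {u v : ℝ → E}

theorem smul_add (hu : Deriv2EqSMulOn c s u) (hv : Deriv2EqSMulOn c s v) (a b : ℝ) :
    Deriv2EqSMulOn c s (fun x => a • u x + b • v x) := by
  refine ⟨(hu.1.const_smul a).add (hv.1.const_smul b), fun x hx => ?_⟩
  rw [deriv_smul_add_smul (hu.1.differentiable two_ne_zero) (hv.1.differentiable two_ne_zero),
    deriv_smul_add_smul hu.1.differentiable_deriv_two hv.1.differentiable_deriv_two]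
  beta_reduce
  rw [hu.2 x hx, hv.2 x hx, smul_comm a, smul_comm b, _root_.smul_add]

/-- `(u, u')` solves the first-order system `(y, z)' = (z, c • y)`, whose right-hand side is
linear, hence Lipschitz, so uniqueness of ODE solutions applies. -/
theorem eqOn_zero {a b : ℝ} (hu : Deriv2EqSMulOn c (Icc a b) u) (ha : u a = 0)
    (ha' : deriv u a = 0) : EqOn u 0 (Icc a b) := by
  have hu₁ : Differentiable ℝ u := hu.1.differentiable two_ne_zero
  have hu₂ : Differentiable ℝ (deriv u) := hu.1.differentiable_deriv_two
  let L : E × E →L[ℝ] E × E :=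
    (ContinuousLinearMap.snd ℝ E E).prod (c • ContinuousLinearMap.fst ℝ E E)
  have key : EqOn (fun t => (u t, deriv u t)) (fun _ => 0) (Icc a b) := by
    refine ODE_solution_unique (v := fun _ => L) (K := ‖L‖₊) (fun _ => L.lipschitz)
      (hu₁.continuous.prodMk hu₂.continuous).continuousOn (fun t ht => ?_)
      continuousOn_const (fun t _ => ?_) (by simp [ha, ha'])
    · have := (hu₁ t).hasDerivAt.prodMk (hu₂ t).hasDerivAt
      rw [hu.2 t (Ico_subset_Icc_self ht)] at this
      exact this.hasDerivWithinAt
    · simpa using hasDerivWithinAt_const t (Ici t) (0 : E × E)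
  exact fun t ht => congrArg Prod.fst (key ht)

end Deriv2EqSMulOn

end

/-- Compare `u` with `s'(a) u - u'(a) s`, which has zero Cauchy data at `a`. -/
theorem Deriv2EqSMulOn.deriv_eq_zero_of_dirichlet {c a b : ℝ} {u s : ℝ → ℝ}
    (hu : Deriv2EqSMulOn c (Icc a b) u) (hua : u a = 0) (hub : u b = 0) (hab : a ≤ b)
    (hs : Deriv2EqSMulOn c (Icc a b) s) (hsa : s a = 0) (hsb : s b ≠ 0) : deriv u a = 0 := by
  have hw := (hu.smul_add hs (deriv s a) (-deriv u a)).eqOn_zero (by simp [hua, hsa])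
    (by rw [deriv_smul_add_smul (hu.1.differentiable two_ne_zero)
      (hs.1.differentiable two_ne_zero)]; simp only [smul_eq_mul]; ring) ⟨hab, le_rfl⟩
  have hub' : deriv u a * s b = 0 := by simpa [hub] using hw
  exact (mul_eq_zero.1 hub').resolve_right hsb

theorem deriv2EqSMulOn_sin_mul (r : ℝ) (s : Set ℝ) :
    Deriv2EqSMulOn (-r ^ 2) s fun x => Real.sin (r * x) := by
  have h₁ : deriv (fun x => Real.sin (r * x)) = fun x => r * Real.cos (r * x) :=
    funext fun x => ((((hasDerivAt_id' x).const_mul r).sin).congr_deriv (by ring)).deriv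
  refine ⟨by fun_prop, fun x _ => ?_⟩
  rw [h₁, smul_eq_mul]
  exact ((((hasDerivAt_id' x).const_mul r).cos.const_mul r).congr_deriv (by ring)).deriv

theorem deriv2EqSMulOn_sinh_mul (r : ℝ) (s : Set ℝ) :
    Deriv2EqSMulOn (r ^ 2) s fun x => Real.sinh (r * x) := by
  have h₁ : deriv (fun x => Real.sinh (r * x)) = fun x => r * Real.cosh (r * x) :=
    funext fun x => ((((hasDerivAt_id' x).const_mul r).sinh).congr_deriv (by ring)).deriv
  refine ⟨by fun_prop, fun x _ => ?_⟩
  rw [h₁, smul_eq_mul]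
  exact ((((hasDerivAt_id' x).const_mul r).cosh.const_mul r).congr_deriv (by ring)).deriv

theorem exists_deriv2EqSMulOn_ne_zero_at_pi {c : ℝ} (hc : ∀ n : ℤ, (n : ℝ) ^ 2 ≠ -c) :
    ∃ s : ℝ → ℝ, Deriv2EqSMulOn c (Icc 0 Real.pi) s ∧ s 0 = 0 ∧ s Real.pi ≠ 0 := by
  rcases lt_or_gt_of_ne (show c ≠ 0 by simpa [eq_comm] using hc 0) with hneg | hpos
  · have hr : -√(-c) ^ 2 = c := by rw [Real.sq_sqrt (by linarith), neg_neg]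
    refine ⟨_, hr ▸ deriv2EqSMulOn_sin_mul √(-c) _, by simp, ?_⟩
    rintro hsin
    obtain ⟨n, hn⟩ := Real.sin_eq_zero_iff.1 hsin
    refine hc n ?_
    rw [mul_left_injective₀ Real.pi_ne_zero hn, Real.sq_sqrt (by linarith)]
  · have hr : √c ^ 2 = c := Real.sq_sqrt hpos.le
    refine ⟨_, hr ▸ deriv2EqSMulOn_sinh_mul √c _, by simp, ?_⟩
    exact (Real.sinh_pos_iff.2 (mul_pos (Real.sqrt_pos.2 hpos) Real.pi_pos)).ne'

theorem Deriv2EqSMulOn.deriv_eq_zero_of_dirichlet_pi {c : ℝ} (hc : ∀ n : ℤ, (n : ℝ) ^ 2 ≠ -c)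
    {u : ℝ → ℝ} (hu : Deriv2EqSMulOn c (Icc 0 Real.pi) u) (h0 : u 0 = 0)
    (hπ : u Real.pi = 0) : deriv u 0 = 0 := by
  obtain ⟨s, hs, hs0, hsπ⟩ := exists_deriv2EqSMulOn_ne_zero_at_pi hc
  exact hu.deriv_eq_zero_of_dirichlet h0 hπ Real.pi_pos.le hs hs0 hsπ

theorem Int.sq_eq_one_of_sq_eq_sq_add_three {m n : ℤ} (h : m ^ 2 = n ^ 2 + 3) : n ^ 2 = 1 := by
  have hmn : |n| < |m| := by nlinarith [sq_abs m, sq_abs n, abs_nonneg m, abs_nonneg n]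
  have hn : |n| ≤ 1 := by nlinarith [sq_abs m, sq_abs n, abs_nonneg m, abs_nonneg n]
  have hm : |m| ≤ 2 := by nlinarith [sq_abs m, sq_abs n, abs_nonneg m, abs_nonneg n]
  obtain ⟨hn₁, hn₂⟩ := abs_le.1 hn
  obtain ⟨hm₁, hm₂⟩ := abs_le.1 hm
  interval_cases m <;> interval_cases n <;> omega

theorem exists_ne_zero_mul_add_mul_eq_zero (p q : ℝ) :
    ∃ a b : ℝ, ¬(a = 0 ∧ b = 0) ∧ a * p + b * q = 0 := by
  by_cases h : p = 0 ∧ q = 0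
  · exact ⟨1, 0, by simp, by simp [h.1]⟩
  · refine ⟨q, -p, fun hqp => h ⟨neg_eq_zero.1 hqp.2, hqp.1⟩, by ring⟩

namespace DirichletSol

variable {l : ℝ} {φ ψ : ℝ → Fin 2 → ℝ}

theorem smul_add (hφ : DirichletSol l φ) (hψ : DirichletSol l ψ) (a b : ℝ) :
    DirichletSol l fun x => a • φ x + b • ψ x := by
  obtain ⟨hφ₂, hφ, hφ0, hφπ⟩ := hφ
  obtain ⟨hψ₂, hψ, hψ0, hψπ⟩ := hψ
  refine ⟨(hφ₂.const_smul a).add (hψ₂.const_smul b), fun x hx => ?_, by simp [hφ0, hψ0],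
    by simp [hφπ, hψπ]⟩
  rw [deriv_smul_add_smul (hφ₂.differentiable two_ne_zero) (hψ₂.differentiable two_ne_zero),
    deriv_smul_add_smul hφ₂.differentiable_deriv_two hψ₂.differentiable_deriv_two]
  simp only [mulVec_add, mulVec_smul]
  linear_combination (norm := module) a • hφ x hx + b • hψ x hx

theorem deriv2EqSMulOn_apply (h : DirichletSol l φ) (k : Fin 2) :
    Deriv2EqSMulOn (![-3, 0] k - l) (Icc 0 Real.pi) fun x => φ x k := by
  obtain ⟨h₂, hode, -, -⟩ := h
  have hderiv {f : ℝ → Fin 2 → ℝ} (hf : Differentiable ℝ f) :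
      deriv (fun x => f x k) = fun x => deriv f x k :=
    funext fun x => (hasDerivAt_pi.1 (hf x).hasDerivAt k).deriv
  refine ⟨contDiff_pi.1 h₂ k, fun x hx => ?_⟩
  have hk := congrFun (hode x hx) k
  rw [← diagonal_vec2, Pi.add_apply, mulVec_diagonal] at hk
  rw [hderiv (h₂.differentiable two_ne_zero), hderiv h₂.differentiable_deriv_two, smul_eq_mul]
  simp only [Pi.neg_apply, Pi.smul_apply, smul_eq_mul] at hk
  linarith

theorem eqOn_zero_of_deriv_apply_eq_zero (h : DirichletSol l φ)
    (h' : ∀ k, deriv (fun x => φ x k) 0 = 0) : EqOn φ 0 (Icc 0 Real.pi) :=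
  fun _ hx => funext fun k => (h.deriv2EqSMulOn_apply k).eqOn_zero (congrFun h.2.2.1 k) (h' k) hx

theorem exists_eqOn_zero_of_deriv_apply_eq_zero (hl : l ≠ 1) :
    ∃ j : Fin 2, ∀ φ, DirichletSol l φ → deriv (fun x => φ x j) 0 = 0 →
      EqOn φ 0 (Icc 0 Real.pi) := by
  by_cases h₀ : ∀ n : ℤ, (n : ℝ) ^ 2 ≠ l + 3
  · refine ⟨1, fun φ hφ h₁ => hφ.eqOn_zero_of_deriv_apply_eq_zero fun k => ?_⟩
    fin_cases k
    · exact (hφ.deriv2EqSMulOn_apply 0).deriv_eq_zero_of_dirichlet_pi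
        (by simpa [add_comm] using h₀) (congrFun hφ.2.2.1 0) (congrFun hφ.2.2.2 0)
    · exact h₁
  · refine ⟨0, fun φ hφ h₀' => hφ.eqOn_zero_of_deriv_apply_eq_zero fun k => ?_⟩
    fin_cases k
    · exact h₀'
    · refine (hφ.deriv2EqSMulOn_apply 1).deriv_eq_zero_of_dirichlet_pi (fun n hn => ?_)
        (congrFun hφ.2.2.1 1) (congrFun hφ.2.2.2 1)
      obtain ⟨m, hm⟩ := not_forall_not.1 h₀
      simp only [cons_val_one, cons_val_zero, zero_sub, neg_neg] at hn
      have hmn : m ^ 2 = n ^ 2 + 3 := by exact_mod_cast (by linarith : (m : ℝ) ^ 2 = n ^ 2 + 3)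
      have hn₁ : (n : ℝ) ^ 2 = 1 := by exact_mod_cast Int.sq_eq_one_of_sq_eq_sq_add_three hmn
      exact hl (by linarith)

end DirichletSol

/-- For `P = diag(-3,0)` with Dirichlet boundary conditions, every
eigenvalue `λ ≠ 1` is simple: the corresponding solution space (of functions on `[0,π]`)
has dimension at most `1`. -/
theorem dirichlet_example_simple_away_from_one
    (l : ℝ) (hl : l ≠ 1)
    (φ ψ : ℝ → Fin 2 → ℝ) (hφ : DirichletSol l φ) (hψ : DirichletSol l ψ) :
    ∃ a b : ℝ, ¬(a = 0 ∧ b = 0) ∧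
      ∀ x ∈ Set.Icc (0:ℝ) Real.pi, a • φ x + b • ψ x = 0 := by
  obtain ⟨j, hj⟩ := DirichletSol.exists_eqOn_zero_of_deriv_apply_eq_zero hl
  obtain ⟨a, b, hab, hslope⟩ :=
    exists_ne_zero_mul_add_mul_eq_zero (deriv (fun x => φ x j) 0) (deriv (fun x => ψ x j) 0)
  refine ⟨a, b, hab, fun x hx => hj _ (hφ.smul_add hψ a b) ?_ hx⟩
  have hφ₁ := ((hφ.deriv2EqSMulOn_apply j).1.differentiable two_ne_zero)
  have hψ₁ := ((hψ.deriv2EqSMulOn_apply j).1.differentiable two_ne_zero)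
  exact (congrFun (deriv_smul_add_smul hφ₁ hψ₁ a b) 0).trans hslope
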